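/- Let Σ be an alphabet and let R and C be positive regular expressions over Σ such that (R,C) is plural. Then for every (E,E)-crossword Y there exists an (R,C)-crossword X such that ρ(X) equals Y or ρ(X) equals the matrix transpose of Y. -/

import Mathlib

/-!
Every row and column of an `(E,E)`-crossword spells one of `♥w` (`w ∈ R`), `♦♠♠♠*`, `w♠`
(`w ∈ C`) and `♥♥♥*♦`, and its first or last letter tells which. Up to transposition the
bottom-left corner is `♦`: otherwise the first row and column are both of the form `♥w`, so all
other rows and columns are of the form `w♠`, which is only consistent on a `2 × 2` grid, whose one
letter is a `1 × 1` `(R,C)`-crossword, excluded by plurality. When the bottom-left corner is `♦`,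
the first column is `♥⋯♥♦`; this makes the first row `♥w`, so every later column starts with a
letter and is `w♠`, and then every row but the last ends with a letter and is `♥w`: the crossword
is `ρ` of its letters.
-/

namespace RegexCrossword

/-- `X` is an `(R,C)`-crossword: every row of `X` (read left to right) matches `R`
and every column (read top to bottom) matches `C`. -/
def IsCrossword {σ : Type} {m n : ℕ} (R C : RegularExpression σ)
    (X : Matrix (Fin m) (Fin n) σ) : Prop :=
  (∀ i : Fin m, (List.ofFn fun j => X i j) ∈ R.matches') ∧
  (∀ j : Fin n, (List.ofFn fun i => X i j) ∈ C.matches')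

/-- An `(R,C)`-crossword (a nonempty matrix) exists. -/
def CrosswordExists {σ : Type} (R C : RegularExpression σ) : Prop :=
  ∃ (m n : ℕ), 0 < m ∧ 0 < n ∧ ∃ X : Matrix (Fin m) (Fin n) σ, IsCrossword R C X

/-- A regular expression is positive iff the empty word does not match it. -/
def PositiveRE {σ : Type} (R : RegularExpression σ) : Prop :=
  [] ∉ R.matches'

/-- `(R,C)` is plural: both are positive and every `(R,C)`-crossword has at
least two rows and at least two columns. -/
def Plural {σ : Type} (R C : RegularExpression σ) : Prop :=
  PositiveRE R ∧ PositiveRE C ∧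
    ∀ (m n : ℕ) (X : Matrix (Fin m) (Fin n) σ),
      0 < m → 0 < n → IsCrossword R C X → 2 ≤ m ∧ 2 ≤ n

/-- The spade symbol `♠` (bottom edge marker) in the extended alphabet `σ ⊕ Fin 3`. -/
def spade {σ : Type} : σ ⊕ Fin 3 := Sum.inr 0

/-- The heart symbol `♥` (left edge marker) in the extended alphabet `σ ⊕ Fin 3`. -/
def heart {σ : Type} : σ ⊕ Fin 3 := Sum.inr 1

/-- The diamond symbol `♦` (corner marker) in the extended alphabet `σ ⊕ Fin 3`. -/
def diamond {σ : Type} : σ ⊕ Fin 3 := Sum.inr 2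

open RegularExpression in
/-- `R' := ♥R ∪ ♦♠♠♠*`. -/
def Rext {σ : Type} (R : RegularExpression σ) : RegularExpression (σ ⊕ Fin 3) :=
  char heart * R.map Sum.inl +
    char diamond * char spade * char spade * (char spade).star

open RegularExpression in
/-- `C' := C♠ ∪ ♥♥♥*♦`. -/
def Cext {σ : Type} (C : RegularExpression σ) : RegularExpression (σ ⊕ Fin 3) :=
  C.map Sum.inl * char spade +
    char heart * char heart * (char heart).star * char diamond

/-- `E := R' ∪ C'`. -/
def Eexp {σ : Type} (R C : RegularExpression σ) : RegularExpression (σ ⊕ Fin 3) :=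
  Rext R + Cext C

/-- `ρ` prepends a new leftmost column of `♥`'s to `X` and then appends a new
bottom row consisting of `♦` followed by `♠`'s. -/
def rho {σ : Type} {m n : ℕ} (X : Matrix (Fin m) (Fin n) σ) :
    Matrix (Fin (m + 1)) (Fin (n + 1)) (σ ⊕ Fin 3) := fun i j =>
  if hi : (i : ℕ) < m then
    if hj : (j : ℕ) = 0 then heart
    else Sum.inl (X ⟨i, hi⟩ ⟨(j : ℕ) - 1, by have := j.isLt; omega⟩)
  else if (j : ℕ) = 0 then diamond else spade

open RegularExpression List
open scoped Matrix

variable {σ : Type}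

lemma mem_star_char_iff {α : Type} {a : α} {w : List α} :
    w ∈ (char a).star.matches' ↔ ∃ k, w = replicate k a := by
  simp only [matches'_star, matches'_char, Language.mem_kstar]
  constructor
  · rintro ⟨L, rfl, hL⟩
    refine ⟨L.length, ?_⟩
    induction L with
    | nil => rfl
    | cons y L ih =>
      rw [flatten_cons, hL y mem_cons_self, ih fun y hy => hL y (mem_cons_of_mem _ hy)]
      rfl
  · rintro ⟨k, rfl⟩
    exact ⟨replicate k [a], by simp, fun y hy => (eq_of_mem_replicate hy).symm ▸ rfl⟩

lemma mem_Rext_iff {R : RegularExpression σ} {w : List (σ ⊕ Fin 3)} :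
    w ∈ (Rext R).matches' ↔ (∃ u ∈ R.matches', w = heart :: u.map Sum.inl) ∨
      ∃ k, w = diamond :: replicate (k + 2) spade := by
  simp only [Rext, matches'_add, matches'_mul, matches'_char, matches'_map, Language.mem_add,
    Language.mem_mul, mem_star_char_iff]
  constructor
  · rintro (⟨_, rfl, _, ⟨u, hu, rfl⟩, rfl⟩ |
      ⟨_, ⟨_, ⟨_, rfl, _, rfl, rfl⟩, _, rfl, rfl⟩, _, ⟨k, rfl⟩, rfl⟩)
    · exact Or.inl ⟨u, hu, rfl⟩
    · exact Or.inr ⟨k, by simp [replicate_succ]⟩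
  · rintro (⟨u, hu, rfl⟩ | ⟨k, rfl⟩)
    · exact Or.inl ⟨_, rfl, _, ⟨u, hu, rfl⟩, rfl⟩
    · exact Or.inr ⟨_, ⟨_, ⟨_, rfl, _, rfl, rfl⟩, _, rfl, rfl⟩, _, ⟨k, rfl⟩,
        by simp [replicate_succ]⟩

lemma mem_Cext_iff {C : RegularExpression σ} {w : List (σ ⊕ Fin 3)} :
    w ∈ (Cext C).matches' ↔ (∃ u ∈ C.matches', w = u.map Sum.inl ++ [spade]) ∨
      ∃ k, w = replicate (k + 2) heart ++ [diamond] := by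
  simp only [Cext, matches'_add, matches'_mul, matches'_char, matches'_map, Language.mem_add,
    Language.mem_mul, mem_star_char_iff]
  constructor
  · rintro (⟨_, ⟨u, hu, rfl⟩, _, rfl, rfl⟩ |
      ⟨_, ⟨_, ⟨_, rfl, _, rfl, rfl⟩, _, ⟨k, rfl⟩, rfl⟩, _, rfl, rfl⟩)
    · exact Or.inl ⟨u, hu, rfl⟩
    · exact Or.inr ⟨k, by simp [replicate_succ]⟩
  · rintro (⟨u, hu, rfl⟩ | ⟨k, rfl⟩)
    · exact Or.inl ⟨_, ⟨u, hu, rfl⟩, _, rfl, rfl⟩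
    · exact Or.inr ⟨_, ⟨_, ⟨_, rfl, _, rfl, rfl⟩, _, ⟨k, rfl⟩, rfl⟩, _, rfl,
        by simp [replicate_succ]⟩

lemma two_le_length_of_mem_Eexp {R C : RegularExpression σ} (hR : PositiveRE R)
    (hC : PositiveRE C) {w : List (σ ⊕ Fin 3)} (hw : w ∈ (Eexp R C).matches') :
    2 ≤ w.length := by
  rw [Eexp, matches'_add] at hw
  rcases hw with hw | hw
  · rcases mem_Rext_iff.1 hw with ⟨u, hu, rfl⟩ | ⟨k, rfl⟩
    · simpa [Nat.one_le_iff_ne_zero] using ne_of_mem_of_not_mem hu hR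
    · simp
  · rcases mem_Cext_iff.1 hw with ⟨u, hu, rfl⟩ | ⟨k, rfl⟩
    · simpa [Nat.one_le_iff_ne_zero] using ne_of_mem_of_not_mem hu hC
    · simp

lemma ofFn_eq_map_inl {α β : Type} {n : ℕ} {h : Fin n → α ⊕ β} {u : List α}
    (hu : ofFn h = u.map Sum.inl) : ∃ g : Fin n → α, ofFn g = u ∧ h = Sum.inl ∘ g := by
  obtain rfl : n = u.length := by simpa using congrArg length hu
  exact ⟨u.get, ofFn_get u, ofFn_injective (by rw [hu, ← map_ofFn, ofFn_get])⟩

lemma ofFn_eq_replicate {α : Type} {n k : ℕ} {h : Fin n → α} {a : α}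
    (hh : ofFn h = replicate k a) : n = k ∧ h = fun _ => a :=
  ⟨by simpa using congrArg length hh,
    funext fun j => eq_of_mem_replicate (hh ▸ (mem_ofFn' h _).2 ⟨j, rfl⟩)⟩

lemma ofFn_eq_cons_iff {α : Type} {n : ℕ} {f : Fin (n + 1) → α} {a : α} {l : List α} :
    ofFn f = a :: l ↔ f 0 = a ∧ ofFn (Fin.tail f) = l := by
  rw [ofFn_succ, cons.injEq]; rfl

lemma ofFn_eq_append_singleton_iff {α : Type} {n : ℕ} {f : Fin (n + 1) → α} {a : α}
    {l : List α} : ofFn f = l ++ [a] ↔ ofFn (Fin.init f) = l ∧ f (Fin.last n) = a := by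
  rw [ofFn_succ', ← concat_eq_append, concat_inj]; rfl

def IsHeartR (R : RegularExpression σ) {n : ℕ} (f : Fin (n + 1) → σ ⊕ Fin 3) : Prop :=
  ∃ g : Fin n → σ, ofFn g ∈ R.matches' ∧ f = Fin.cons heart (Sum.inl ∘ g)

def IsDiamondSpades {n : ℕ} (f : Fin (n + 1) → σ ⊕ Fin 3) : Prop :=
  2 ≤ n ∧ f = Fin.cons diamond fun _ => spade

def IsCSpade (C : RegularExpression σ) {n : ℕ} (f : Fin (n + 1) → σ ⊕ Fin 3) : Prop :=
  ∃ g : Fin n → σ, ofFn g ∈ C.matches' ∧ f = Fin.snoc (Sum.inl ∘ g) spade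

def IsHeartsDiamond {n : ℕ} (f : Fin (n + 1) → σ ⊕ Fin 3) : Prop :=
  2 ≤ n ∧ f = Fin.snoc (fun _ => heart) diamond

lemma isHeartR_or_isDiamondSpades_or_isCSpade_or_isHeartsDiamond {R C : RegularExpression σ}
    {n : ℕ} {f : Fin (n + 1) → σ ⊕ Fin 3} (hf : ofFn f ∈ (Eexp R C).matches') :
    IsHeartR R f ∨ IsDiamondSpades f ∨ IsCSpade C f ∨ IsHeartsDiamond f := by
  rw [Eexp, matches'_add] at hf
  rcases hf with hf | hf
  · rcases mem_Rext_iff.1 hf with ⟨u, hu, hfu⟩ | ⟨k, hfk⟩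
    · obtain ⟨h0, ht⟩ := ofFn_eq_cons_iff.1 hfu
      obtain ⟨g, rfl, hg⟩ := ofFn_eq_map_inl ht
      exact Or.inl ⟨g, hu, by rw [← hg, ← h0, Fin.cons_self_tail]⟩
    · obtain ⟨h0, ht⟩ := ofFn_eq_cons_iff.1 hfk
      obtain ⟨rfl, hs⟩ := ofFn_eq_replicate ht
      exact Or.inr (Or.inl ⟨by omega, by rw [← hs, ← h0, Fin.cons_self_tail]⟩)
  · rcases mem_Cext_iff.1 hf with ⟨u, hu, hfu⟩ | ⟨k, hfk⟩
    · obtain ⟨hi, hl⟩ := ofFn_eq_append_singleton_iff.1 hfu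
      obtain ⟨g, rfl, hg⟩ := ofFn_eq_map_inl hi
      exact Or.inr (Or.inr (Or.inl ⟨g, hu, by rw [← hg, ← hl, Fin.snoc_init_self]⟩))
    · obtain ⟨hi, hl⟩ := ofFn_eq_append_singleton_iff.1 hfk
      obtain ⟨rfl, hs⟩ := ofFn_eq_replicate hi
      exact Or.inr (Or.inr (Or.inr ⟨by omega, by rw [← hs, ← hl, Fin.snoc_init_self]⟩))

section BoundaryLetters

variable {R C : RegularExpression σ} {n : ℕ} {f : Fin (n + 2) → σ ⊕ Fin 3}

lemma head_ne_spade (hf : ofFn f ∈ (Eexp R C).matches') : f 0 ≠ spade := by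
  rcases isHeartR_or_isDiamondSpades_or_isCSpade_or_isHeartsDiamond hf with
    ⟨g, -, rfl⟩ | ⟨-, rfl⟩ | ⟨g, -, rfl⟩ | ⟨-, rfl⟩ <;> simp [heart, diamond, spade]

lemma isHeartR_or_isHeartsDiamond_of_head_heart (hf : ofFn f ∈ (Eexp R C).matches')
    (h0 : f 0 = heart) : IsHeartR R f ∨ IsHeartsDiamond f := by
  rcases isHeartR_or_isDiamondSpades_or_isCSpade_or_isHeartsDiamond hf with
    hf | ⟨-, rfl⟩ | ⟨g, -, rfl⟩ | hf
  · exact Or.inl hf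
  all_goals first | exact Or.inr hf | simp [heart, diamond, spade] at h0

lemma isDiamondSpades_of_head_diamond (hf : ofFn f ∈ (Eexp R C).matches')
    (h0 : f 0 = diamond) : IsDiamondSpades f := by
  rcases isHeartR_or_isDiamondSpades_or_isCSpade_or_isHeartsDiamond hf with
    ⟨g, -, rfl⟩ | hf | ⟨g, -, rfl⟩ | ⟨-, rfl⟩
  all_goals first | exact hf | simp [heart, diamond, spade] at h0

lemma isCSpade_of_head_inl (hf : ofFn f ∈ (Eexp R C).matches') {a : σ}
    (h0 : f 0 = Sum.inl a) : IsCSpade C f := by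
  rcases isHeartR_or_isDiamondSpades_or_isCSpade_or_isHeartsDiamond hf with
    ⟨g, -, rfl⟩ | ⟨-, rfl⟩ | hf | ⟨-, rfl⟩
  all_goals first | exact hf | simp [heart, diamond, spade] at h0

lemma isHeartR_of_last_inl (hf : ofFn f ∈ (Eexp R C).matches') {a : σ}
    (hl : f (Fin.last _) = Sum.inl a) : IsHeartR R f := by
  rcases isHeartR_or_isDiamondSpades_or_isCSpade_or_isHeartsDiamond hf with
    hf | ⟨-, rfl⟩ | ⟨g, -, rfl⟩ | ⟨-, rfl⟩
  all_goals first | exact hf | simp [heart, diamond, spade] at hl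

lemma isHeartsDiamond_of_last_diamond (hf : ofFn f ∈ (Eexp R C).matches')
    (hl : f (Fin.last _) = diamond) : IsHeartsDiamond f := by
  rcases isHeartR_or_isDiamondSpades_or_isCSpade_or_isHeartsDiamond hf with
    ⟨g, -, rfl⟩ | ⟨-, rfl⟩ | ⟨g, -, rfl⟩ | hf
  all_goals first | exact hf | simp [heart, diamond, spade] at hl

end BoundaryLetters

section Rho

variable {p q : ℕ} (X : Matrix (Fin p) (Fin q) σ)

@[simp] lemma rho_castSucc_zero (i : Fin p) : rho X i.castSucc 0 = heart := by simp [rho]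

@[simp] lemma rho_castSucc_succ (i : Fin p) (j : Fin q) :
    rho X i.castSucc j.succ = Sum.inl (X i j) := by simp [rho]

@[simp] lemma rho_last_zero : rho X (Fin.last p) 0 = diamond := by simp [rho]

@[simp] lemma rho_last_succ (j : Fin q) : rho X (Fin.last p) j.succ = spade := by simp [rho]

end Rho

lemma IsCrossword.transpose {R C : RegularExpression σ} {m n : ℕ}
    {X : Matrix (Fin m) (Fin n) σ} (hX : IsCrossword R C X) : IsCrossword C R Xᵀ :=
  ⟨hX.2, hX.1⟩

lemma castSucc_mk_one {n : ℕ} (h : 1 < n + 1) : (Fin.castSucc ⟨1, h⟩ : Fin (n + 1 + 1)) = 1 := by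
  ext
  simp

lemma Plural.not_singleton_mem_and {R C : RegularExpression σ} (h : Plural R C) (a : σ) :
    ¬([a] ∈ R.matches' ∧ [a] ∈ C.matches') := by
  rintro ⟨hR, hC⟩
  have := h.2.2 1 1 (fun _ _ => a) one_pos one_pos
    ⟨fun _ => by simpa using hR, fun _ => by simpa using hC⟩
  omega

section Grid

variable {R C : RegularExpression σ} {p q : ℕ}
  {Y : Matrix (Fin (p + 1 + 1)) (Fin (q + 1 + 1)) (σ ⊕ Fin 3)}

lemma isHeartR_row_zero_of_isHeartsDiamond_col_zero (hY : IsCrossword (Eexp R C) (Eexp R C) Y)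
    (hcol0 : IsHeartsDiamond fun i => Y i 0) : IsHeartR R (Y 0) := by
  obtain ⟨hp, hcol0⟩ := hcol0
  have h00 : Y 0 0 = heart := by simpa using congrFun hcol0 0
  refine (isHeartR_or_isHeartsDiamond_of_head_heart (hY.1 0) h00).resolve_right ?_
  rintro ⟨-, hrow0⟩
  obtain ⟨-, hcol_last⟩ := isDiamondSpades_of_head_diamond (hY.2 (Fin.last _))
    (by simpa using congrFun hrow0 (Fin.last _))
  -- row `1` would start with `♥` and end with `♠`
  have h10 : Y 1 0 = heart := by
    have h := congrFun hcol0 (Fin.castSucc ⟨1, by omega⟩)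
    rwa [Fin.snoc_castSucc, castSucc_mk_one] at h
  have h1l : Y 1 (Fin.last _) = spade := by simpa using congrFun hcol_last 1
  rcases isHeartR_or_isHeartsDiamond_of_head_heart (hY.1 1) h10 with ⟨g, -, h⟩ | ⟨-, h⟩ <;>
  simpa [h1l, heart, diamond, spade] using congrFun h (Fin.last _)

lemma exists_rho_eq_of_last_zero_eq_diamond (hY : IsCrossword (Eexp R C) (Eexp R C) Y)
    (hd : Y (Fin.last _) 0 = diamond) :
    ∃ X : Matrix (Fin (p + 1)) (Fin (q + 1)) σ, IsCrossword R C X ∧ rho X = Y := by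
  have hcol0 := isHeartsDiamond_of_last_diamond (hY.2 0) hd
  have hleft (i : Fin (p + 1)) : Y i.castSucc 0 = heart := by
    simpa using congrFun hcol0.2 i.castSucc
  have hcol (j : Fin (q + 1)) : IsCSpade C (fun i => Y i j.succ) := by
    obtain ⟨g, -, hg⟩ := isHeartR_row_zero_of_isHeartsDiamond_col_zero hY hcol0
    exact isCSpade_of_head_inl (hY.2 _) (a := g j) (by simpa using congrFun hg j.succ)
  have hrow (i : Fin (p + 1)) : IsHeartR R (Y i.castSucc) := by
    obtain ⟨g, -, hg⟩ := hcol (Fin.last q)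
    exact isHeartR_of_last_inl (hY.1 _) (a := g i) (by simpa using congrFun hg i.castSucc)
  choose X hXR hXY using hrow
  refine ⟨Matrix.of X, ⟨hXR, fun j => ?_⟩, ?_⟩
  · obtain ⟨g, hgC, hg⟩ := hcol j
    convert hgC using 2
    funext i
    simpa [hXY] using congrFun hg i.castSucc
  · ext i j
    cases i using Fin.lastCases with
    | last =>
      cases j using Fin.cases with
      | zero => simp [hd]
      | succ j =>
        obtain ⟨g, -, hg⟩ := hcol j
        simpa using (congrFun hg (Fin.last _)).symm
    | cast i =>
      cases j using Fin.cases with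
      | zero => simp [hleft]
      | succ j => simp [hXY]

lemma eq_zero_of_inl_zero_one_of_inl_last_zero (hY : IsCrossword (Eexp R C) (Eexp R C) Y)
    {a b : σ} (h01 : Y 0 1 = Sum.inl a) (hl0 : Y (Fin.last _) 0 = Sum.inl b) : q = 0 := by
  obtain ⟨g, -, hg⟩ := isCSpade_of_head_inl (hY.2 1) h01
  obtain ⟨g', -, hg'⟩ := isCSpade_of_head_inl (hY.1 (Fin.last _)) hl0
  by_contra hq
  -- the entry in the last row and column `1` is `♠` for the column, a letter for the row
  have h1 : Y (Fin.last _) 1 = spade := by simpa using congrFun hg (Fin.last _)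
  have h2 := congrFun hg' (Fin.castSucc ⟨1, by omega⟩)
  rw [Fin.snoc_castSucc, castSucc_mk_one] at h2
  simp [h1, spade] at h2

lemma last_zero_eq_diamond_or_zero_last_eq_diamond (hRC : Plural R C)
    (hY : IsCrossword (Eexp R C) (Eexp R C) Y) :
    Y (Fin.last _) 0 = diamond ∨ Y 0 (Fin.last _) = diamond := by
  by_contra! h
  obtain ⟨hl0, h0l⟩ := h
  rcases isHeartR_or_isDiamondSpades_or_isCSpade_or_isHeartsDiamond (hY.2 0) with
    ⟨u, -, hu⟩ | ⟨-, hu⟩ | ⟨u, -, hu⟩ | ⟨-, hu⟩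
  · have h00 : Y 0 0 = heart := by simpa using congrFun hu 0
    obtain ⟨v, hvR, hv⟩ : IsHeartR R (Y 0) :=
      (isHeartR_or_isHeartsDiamond_of_head_heart (hY.1 0) h00).resolve_right
        fun ⟨_, h⟩ => h0l (by simpa using congrFun h (Fin.last _))
    obtain rfl : q = 0 := eq_zero_of_inl_zero_one_of_inl_last_zero hY
      (by simpa using congrFun hv 1) (by simpa using congrFun hu (Fin.last _))
    obtain rfl : p = 0 := eq_zero_of_inl_zero_one_of_inl_last_zero hY.transpose
      (by simpa using congrFun hu 1) (by simpa using congrFun hv (Fin.last _))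
    obtain ⟨w, hwC, hw⟩ := isCSpade_of_head_inl (hY.2 1) (by simpa using congrFun hv 1)
    have hwv : w 0 = v 0 := by simpa [hv] using (congrFun hw 0).symm
    exact hRC.not_singleton_mem_and (v 0) ⟨by simpa using hvR, by simpa [hwv] using hwC⟩
  · obtain ⟨-, hrow0⟩ := isDiamondSpades_of_head_diamond (hY.1 0) (by simpa using congrFun hu 0)
    exact head_ne_spade (hY.2 1) (by simpa using congrFun hrow0 1)
  · exact head_ne_spade (hY.1 (Fin.last _)) (by simpa using congrFun hu (Fin.last _))
  · exact hl0 (by simpa using congrFun hu (Fin.last _))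

end Grid

/-- **Statement 5.** Let `R` and `C` be positive regular expressions over `σ`
with `(R, C)` plural.  For every `(E,E)`-crossword `Y` there is an
`(R,C)`-crossword `X` such that `ρ(X)` equals `Y` or `ρ(X)` equals the matrix
transpose of `Y`. -/
theorem every_EE_crossword_comes_from_rho {σ : Type}
    (R C : RegularExpression σ) (hplural : Plural R C)
    (m n : ℕ) (hm : 0 < m) (hn : 0 < n)
    (Y : Matrix (Fin m) (Fin n) (σ ⊕ Fin 3))
    (hY : IsCrossword (Eexp R C) (Eexp R C) Y) :
    ∃ (p q : ℕ) (X : Matrix (Fin p) (Fin q) σ),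
      0 < p ∧ 0 < q ∧ IsCrossword R C X ∧
      ((m = p + 1 ∧ n = q + 1 ∧ HEq (rho X) Y) ∨
        (n = p + 1 ∧ m = q + 1 ∧ HEq (rho X) Y.transpose)) := by
  have hm2 : 2 ≤ m := by
    simpa using two_le_length_of_mem_Eexp hplural.1 hplural.2.1 (hY.2 ⟨0, hn⟩)
  have hn2 : 2 ≤ n := by
    simpa using two_le_length_of_mem_Eexp hplural.1 hplural.2.1 (hY.1 ⟨0, hm⟩)
  obtain ⟨p, rfl⟩ : ∃ p, m = p + 1 + 1 := ⟨m - 2, by omega⟩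
  obtain ⟨q, rfl⟩ : ∃ q, n = q + 1 + 1 := ⟨n - 2, by omega⟩
  rcases last_zero_eq_diamond_or_zero_last_eq_diamond hplural hY with hd | hd
  · obtain ⟨X, hX, hXY⟩ := exists_rho_eq_of_last_zero_eq_diamond hY hd
    exact ⟨p + 1, q + 1, X, p.succ_pos, q.succ_pos, hX, Or.inl ⟨rfl, rfl, heq_of_eq hXY⟩⟩
  · obtain ⟨X, hX, hXY⟩ := exists_rho_eq_of_last_zero_eq_diamond hY.transpose hd
    exact ⟨q + 1, p + 1, X, q.succ_pos, p.succ_pos, hX, Or.inr ⟨rfl, rfl, heq_of_eq hXY⟩⟩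

end RegexCrossword
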